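/- Let a : ℝ → ℝ be integrable and even, let L > 0, and let n, g : ℝ → ℝ be L-periodic, measurable, and bounded. Then the integral over one period of the jump expression vanishes: ∫_{[0,L]} [ g(x) ∫_ℝ a(x−y) n(y) dy − n(x) ∫_ℝ a(x−y) g(y) dy ] dx = 0. In particular, for an L-periodic solution of the jump kinetic equation (with g(x) = exp(−∫ φ(x−u) n(u) du)) the total number of particles on a period interval is conserved. -/

import Mathlib

open MeasureTheory

/-- For `a` integrable and even, and `L`-periodic measurable bounded `n`, `g`,
the integral over one period of the jump expression vanishes:
`∫_{[0,L]} [ g(x) ∫ a(x−y) n(y) dy − n(x) ∫ a(x−y) g(y) dy ] dx = 0`. -/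
theorem periodic_jump_mass_conserved (a n g : ℝ → ℝ) (L : ℝ) (hL : 0 < L)
    (ha : Integrable a) (hae : ∀ x, a (-x) = a x)
    (hnp : ∀ x : ℝ, n (x + L) = n x) (hgp : ∀ x : ℝ, g (x + L) = g x)
    (hnm : Measurable n) (hgm : Measurable g)
    (hnb : ∃ M : ℝ, ∀ x, |n x| ≤ M) (hgb : ∃ M : ℝ, ∀ x, |g x| ≤ M) :
    ∫ x in Set.Icc (0 : ℝ) L,
      (g x * (∫ y : ℝ, a (x - y) * n y) - n x * ∫ y : ℝ, a (x - y) * g y) = 0 := by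
  obtain ⟨N, hN⟩ := hnb
  obtain ⟨Mg, hMg⟩ := hgb
  have hN0 : 0 ≤ N := le_trans (abs_nonneg _) (hN 0)
  have hMg0 : 0 ≤ Mg := le_trans (abs_nonneg _) (hMg 0)
  -- measurable representative of `a`
  obtain ⟨b, hbm, hab⟩ : ∃ b : ℝ → ℝ, StronglyMeasurable b ∧ a =ᵐ[volume] b :=
    ⟨ha.1.mk a, ha.1.stronglyMeasurable_mk, ha.1.ae_eq_mk⟩
  have hbint : Integrable b := ha.congr hab
  have hbe : ∀ᵐ z : ℝ, b (-z) = b z := by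
    have h1 : (fun z : ℝ => b (-z)) =ᵐ[volume] fun z : ℝ => a (-z) :=
      (Measure.measurePreserving_neg (volume : Measure ℝ)).quasiMeasurePreserving.ae_eq_comp
        hab.symm
    filter_upwards [h1, hab] with z h1 h2
    rw [h1, hae, h2]
  -- integrability helpers
  have intaux : ∀ (m : ℝ → ℝ), Measurable m → ∀ C : ℝ, (∀ z, |m z| ≤ C) →
      Integrable (fun z => m z * b z) := by
    intro m hm C hC
    exact hbint.bdd_mul hm.aestronglyMeasurable
      (Filter.Eventually.of_forall fun z => by simpa [Real.norm_eq_abs] using hC z)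
  have intIcc : ∀ (m : ℝ → ℝ), Measurable m → ∀ C : ℝ, (∀ z, |m z| ≤ C) →
      IntegrableOn m (Set.Icc (0 : ℝ) L) := by
    intro m hm C hC
    refine Integrable.mono' (g := fun _ => C) (integrableOn_const measure_Icc_lt_top.ne)
      hm.aestronglyMeasurable.restrict
      (Filter.Eventually.of_forall fun x => by simpa [Real.norm_eq_abs] using hC x)
  -- rewrite the integrand as a single integral against `b`
  have heq : ∀ x : ℝ,
      g x * (∫ y : ℝ, a (x - y) * n y) - n x * (∫ y : ℝ, a (x - y) * g y)
        = ∫ z : ℝ, (g x * n (x - z) - n x * g (x - z)) * b z := by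
    intro x
    have hq : (fun y : ℝ => a (x - y)) =ᵐ[volume] fun y : ℝ => b (x - y) :=
      (Measure.measurePreserving_sub_left (volume : Measure ℝ) x).quasiMeasurePreserving.ae_eq_comp hab
    have e1 : ∀ m : ℝ → ℝ, (∫ y : ℝ, a (x - y) * m y) = ∫ z : ℝ, m (x - z) * b z := by
      intro m
      have step1 : (∫ y : ℝ, a (x - y) * m y) = ∫ y : ℝ, b (x - y) * m y :=
        integral_congr_ae (by filter_upwards [hq] with y hy; rw [hy])
      have step2 := integral_sub_left_eq_self (fun z => m (x - z) * b z) volume x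
      rw [step1, ← step2]
      exact integral_congr_ae (.of_forall fun y => by show b (x - y) * m y = m (x - (x - y)) * b (x - y); rw [sub_sub_cancel]; ring)
    have int1 : Integrable (fun z : ℝ => g x * (n (x - z) * b z)) := by
      have := intaux (fun z => g x * n (x - z))
        (measurable_const.mul (hnm.comp (measurable_const.sub measurable_id))) (Mg * N)
        (fun z => by
          rw [abs_mul]; exact mul_le_mul (hMg _) (hN _) (abs_nonneg _) hMg0)
      simpa [mul_assoc] using this
    have int2 : Integrable (fun z : ℝ => n x * (g (x - z) * b z)) := by
      have := intaux (fun z => n x * g (x - z))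
        (measurable_const.mul (hgm.comp (measurable_const.sub measurable_id))) (N * Mg)
        (fun z => by
          rw [abs_mul]; exact mul_le_mul (hN _) (hMg _) (abs_nonneg _) hN0)
      simpa [mul_assoc] using this
    rw [e1 n, e1 g, ← integral_const_mul, ← integral_const_mul, ← integral_sub int1 int2]
    exact integral_congr_ae (.of_forall fun z => by ring)
  simp only [heq]
  -- Fubini
  have hFub : Integrable
      (Function.uncurry fun x z : ℝ => (g x * n (x - z) - n x * g (x - z)) * b z)
      ((volume.restrict (Set.Icc (0 : ℝ) L)).prod volume) := by
    have hmeas : Measurable fun p : ℝ × ℝ =>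
        (g p.1 * n (p.1 - p.2) - n p.1 * g (p.1 - p.2)) * b p.2 :=
      (((hgm.comp measurable_fst).mul (hnm.comp (measurable_fst.sub measurable_snd))).sub
        ((hnm.comp measurable_fst).mul (hgm.comp (measurable_fst.sub measurable_snd)))).mul
        (hbm.measurable.comp measurable_snd)
    refine Integrable.mono' (g := fun p : ℝ × ℝ => (Mg * N + N * Mg) * |b p.2|) ?_
      hmeas.aestronglyMeasurable ?_
    · exact Integrable.mul_prod (f := fun _ : ℝ => Mg * N + N * Mg) (integrableOn_const measure_Icc_lt_top.ne) hbint.abs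
    · refine Filter.Eventually.of_forall fun p => ?_
      have h1 : |g p.1 * n (p.1 - p.2)| ≤ Mg * N := by
        rw [abs_mul]; exact mul_le_mul (hMg _) (hN _) (abs_nonneg _) hMg0
      have h2 : |n p.1 * g (p.1 - p.2)| ≤ N * Mg := by
        rw [abs_mul]; exact mul_le_mul (hN _) (hMg _) (abs_nonneg _) hN0
      calc ‖(g p.1 * n (p.1 - p.2) - n p.1 * g (p.1 - p.2)) * b p.2‖
          = |g p.1 * n (p.1 - p.2) - n p.1 * g (p.1 - p.2)| * |b p.2| := by
            rw [Real.norm_eq_abs, abs_mul]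
        _ ≤ (Mg * N + N * Mg) * |b p.2| :=
            mul_le_mul_of_nonneg_right ((abs_sub _ _).trans (add_le_add h1 h2)) (abs_nonneg _)
  rw [integral_integral_swap hFub]
  simp only [integral_mul_const]
  -- shift invariance over a period
  have hshift : ∀ (u v : ℝ → ℝ), (∀ x, u (x + L) = u x) → (∀ x, v (x + L) = v x) → ∀ z : ℝ,
      (∫ x in Set.Icc (0 : ℝ) L, u x * v (x - z)) = ∫ x in Set.Icc (0 : ℝ) L, u (x + z) * v x := by
    intro u v hu hv z
    have hper : Function.Periodic (fun x => u x * v (x - z)) L := by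
      intro x
      simp only
      rw [hu, show x + L - z = x - z + L by ring, hv]
    have e1 : (∫ x in Set.Icc (0 : ℝ) L, u x * v (x - z))
        = ∫ x in (0 : ℝ)..L, u x * v (x - z) := by
      rw [intervalIntegral.integral_of_le hL.le, integral_Icc_eq_integral_Ioc]
    have e2 : (∫ x in Set.Icc (0 : ℝ) L, u (x + z) * v x)
        = ∫ x in (0 : ℝ)..L, u (x + z) * v x := by
      rw [intervalIntegral.integral_of_le hL.le, integral_Icc_eq_integral_Ioc]
    rw [e1, e2]
    have e3 : (∫ x in (0 : ℝ)..L, u (x + z) * v x)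
        = ∫ x in (0 : ℝ)..L, (fun t => u t * v (t - z)) (x + z) := by
      simp only [add_sub_cancel_right]
    rw [e3, intervalIntegral.integral_comp_add_right (fun t => u t * v (t - z)) z, zero_add]
    have h4 := hper.intervalIntegral_add_eq z 0
    rw [zero_add] at h4
    rw [add_comm L z, h4]
  -- oddness of the inner integral
  have hsplit : ∀ z : ℝ,
      (∫ x in Set.Icc (0 : ℝ) L, (g x * n (x - z) - n x * g (x - z)))
        = (∫ x in Set.Icc (0 : ℝ) L, g x * n (x - z))
          - ∫ x in Set.Icc (0 : ℝ) L, n x * g (x - z) := by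
    intro z
    exact integral_sub
      (intIcc _ (hgm.mul (hnm.comp (measurable_id.sub measurable_const))) (Mg * N)
        (fun x => by rw [abs_mul]; exact mul_le_mul (hMg _) (hN _) (abs_nonneg _) hMg0))
      (intIcc _ (hnm.mul (hgm.comp (measurable_id.sub measurable_const))) (N * Mg)
        (fun x => by rw [abs_mul]; exact mul_le_mul (hN _) (hMg _) (abs_nonneg _) hN0))
  have hPQ : ∀ z : ℝ,
      (∫ x in Set.Icc (0 : ℝ) L, g x * n (x - z))
        = ∫ x in Set.Icc (0 : ℝ) L, n x * g (x - -z) := by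
    intro z
    rw [hshift g n hgp hnp z]
    simp only [sub_neg_eq_add]
    exact integral_congr_ae (.of_forall fun x => mul_comm _ _)
  set F : ℝ → ℝ := fun z => ∫ x in Set.Icc (0 : ℝ) L, (g x * n (x - z) - n x * g (x - z)) with hF
  have Fodd : ∀ z : ℝ, F (-z) = -F z := by
    intro z
    rw [hF]
    simp only
    rw [hsplit (-z), hsplit z, hPQ (-z), hPQ z, neg_neg]
    ring
  -- conclude by oddness of `z ↦ F z * b z`
  have h1 : (∫ z : ℝ, F z * b z) = ∫ z : ℝ, F (-z) * b (-z) :=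
    (integral_neg_eq_self (fun z => F z * b z) volume).symm
  have h2 : (∫ z : ℝ, F (-z) * b (-z)) = ∫ z : ℝ, -(F z * b z) := by
    refine integral_congr_ae ?_
    filter_upwards [hbe] with z hz
    rw [hz, Fodd z]; ring
  rw [integral_neg] at h2
  linarith [h1.trans h2]
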